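/- Let z : ZMod (2t) → ℤ satisfy |z(k+1) - z(k)| = 1 and z(k+t) = t - z(k) for all k. Then the number of local minima of z equals t/2 + (1/(4t))·∑_{k=0}^{2t-1} |ẑ(k)|²·(cos²(πk/t) - cos(πk/t)). -/

import Mathlib

/-- Number of local minima of a `2t`-periodic integer sequence. -/
def minimaCount (t : ℕ) (z : ZMod (2*t) → ℤ) : ℕ :=
  ((Finset.range (2*t)).filter (fun k : ℕ =>
    z ((k : ZMod (2*t)) - 1) > z (k : ZMod (2*t)) ∧
    z ((k : ZMod (2*t)) + 1) > z (k : ZMod (2*t)))).card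

/-- Discrete Fourier transform of a `2t`-periodic sequence,
using the primitive `2t`-th root of unity `exp(-πi/t)`. -/
noncomputable def dft (t : ℕ) (z : ZMod (2*t) → ℂ) (k : ℕ) : ℂ :=
  ∑ j ∈ Finset.range (2*t),
    z (j : ZMod (2*t)) * Complex.exp (-(Real.pi : ℂ) * Complex.I * k * j / t)

/-! Write `d j = z j - z (j - 1) = ±1`. Pointwise,
`d j * d (j + 1) = 1 + d (j + 1) - d j - 4 [j is a local minimum]`, and the middle terms telescope
around the cycle, so `∑ d j * d (j + 1) = 2t - 4 · #minima`; summation by parts turns the left side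
into `-z (I - C)² zᵀ` for the cyclic shift `C`. The shift is diagonalised by the Fourier transform: by Wiener–Khinchin,
`∑ₖ |ẑ k|² cos (sπk/t) = 2t ∑ⱼ z (j + s) z j`, and `cos² θ - cos θ = ½ + ½ cos 2θ - cos θ`
recombines the shifts `s = 0, 1, 2` into `t · z (I - C)² zᵀ`. -/

open Finset
open scoped ComplexConjugate ZMod

lemma mul_eq_of_abs_eq_one {a b : ℤ} (ha : |a| = 1) (hb : |b| = 1) :
    a * b = 1 + b - a - if a < 0 ∧ 0 < b then 4 else 0 := by
  rcases (abs_eq zero_le_one).mp ha with rfl | rfl <;>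
    rcases (abs_eq zero_le_one).mp hb with rfl | rfl <;> norm_num

namespace ZMod

variable {N : ℕ} [NeZero N]

lemma sum_range_natCast {M : Type*} [AddCommMonoid M] (f : ZMod N → M) :
    ∑ j ∈ range N, f j = ∑ x, f x := by
  refine sum_nbij' (↑) ZMod.val (by simp) (fun x _ ↦ by simpa using ZMod.val_lt x) ?_ ?_ (by simp)
  · intro j hj; simp [ZMod.val_natCast_of_lt (mem_range.mp hj)]
  · intro x _; simp

lemma sum_stdAddChar_mul (a : ZMod N) :
    ∑ k, stdAddChar (a * k) = if a = 0 then (N : ℂ) else 0 := by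
  simp_rw [mul_comm a]
  simpa using AddChar.sum_mulShift a (isPrimitive_stdAddChar N)

theorem sum_sq_norm_dft_mul_stdAddChar (Φ : ZMod N → ℂ) (s : ZMod N) :
    ∑ k, (‖𝓕 Φ k‖ ^ 2 : ℂ) * stdAddChar (s * k) = N * ∑ j, Φ (j + s) * conj (Φ j) := by
  have expand (k : ZMod N) : (‖𝓕 Φ k‖ ^ 2 : ℂ) * stdAddChar (s * k) =
      ∑ b, ∑ a, Φ a * conj (Φ b) * stdAddChar ((s + b - a) * k) := by
    rw [← Complex.mul_conj', dft_apply, map_sum, sum_mul_sum, sum_comm, sum_mul]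
    refine sum_congr rfl fun b _ ↦ ?_
    rw [sum_mul]
    refine sum_congr rfl fun a _ ↦ ?_
    simp only [smul_eq_mul, map_mul, ← AddChar.map_neg_eq_conj]
    rw [show (s + b - a) * k = -(a * k) + -(-(b * k)) + s * k by ring, AddChar.map_add_eq_mul,
      AddChar.map_add_eq_mul]
    ring
  simp_rw [expand]
  rw [sum_comm, mul_sum]
  refine sum_congr rfl fun b _ ↦ ?_
  rw [sum_comm]
  simp_rw [← mul_sum, sum_stdAddChar_mul, sub_eq_zero, mul_ite, mul_zero, sum_ite_eq, mem_univ,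
    if_true, add_comm b]
  ring

lemma sum_mul_second_difference {R : Type*} [CommRing R] (x : ZMod N → R) :
    ∑ j, x j * (x j - 2 * x (j + 1) + x (j + 2)) = -∑ j, (x j - x (j - 1)) * (x (j + 1) - x j) := by
  set g : ZMod N → R := fun j ↦ x j * (x (j + 2) - x (j + 1))
  have shift : ∑ j, g (j - 1) = ∑ j, g j := (Equiv.subRight 1).sum_comp g
  rw [eq_neg_iff_add_eq_zero, ← sum_add_distrib]
  calc ∑ j, (x j * (x j - 2 * x (j + 1) + x (j + 2)) + (x j - x (j - 1)) * (x (j + 1) - x j))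
      _ = ∑ j, (g j - g (j - 1)) := sum_congr rfl fun j _ ↦ by simp only [g]; ring_nf
      _ = 0 := by rw [sum_sub_distrib, shift, sub_self]

lemma sum_diff_mul_diff_eq_sub_four_mul_card (z : ZMod N → ℤ)
    (hstep : ∀ k, |z (k + 1) - z k| = 1) :
    ∑ j, (z j - z (j - 1)) * (z (j + 1) - z j) =
      N - 4 * #{j | z (j - 1) > z j ∧ z (j + 1) > z j} := by
  have pointwise (j : ZMod N) : (z j - z (j - 1)) * (z (j + 1) - z j) =
      1 + (z (j + 1) - z j) - (z j - z (j - 1)) -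
        if z (j - 1) > z j ∧ z (j + 1) > z j then 4 else 0 := by
    have := mul_eq_of_abs_eq_one (by simpa using hstep (j - 1)) (hstep j)
    simpa only [sub_neg, sub_pos] using this
  have telescope : ∑ j, (z (j + 1) - z j) = ∑ j, (z j - z (j - 1)) := by
    rw [← (Equiv.subRight (1 : ZMod N)).sum_comp]
    simp
  simp only [pointwise, sum_sub_distrib, sum_add_distrib, telescope, sum_ite, sum_const_zero,
    sum_const, card_univ, ZMod.card]
  ring

end ZMod

section

variable {t : ℕ} [NeZero (2 * t)]

lemma dft_eq_zmod_dft (Φ : ZMod (2 * t) → ℂ) (k : ℕ) : dft t Φ k = 𝓕 Φ k := by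
  rw [dft, ZMod.dft_apply, ← ZMod.sum_range_natCast]
  refine sum_congr rfl fun j _ ↦ ?_
  have : -((j : ZMod (2 * t)) * k) = ((-(j * k) : ℤ) : ZMod (2 * t)) := by push_cast; rfl
  rw [smul_eq_mul, mul_comm, this, ZMod.stdAddChar_coe]
  congr 2
  push_cast
  field_simp

lemma re_stdAddChar_natCast_mul (s k : ℕ) :
    (ZMod.stdAddChar ((s : ZMod (2 * t)) * (k : ZMod (2 * t)))).re =
      Real.cos (s * (Real.pi * k / t)) := by
  have : (s : ZMod (2 * t)) * k = ((s * k : ℤ) : ZMod (2 * t)) := by push_cast; rfl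
  rw [this, ZMod.stdAddChar_coe, ← Complex.exp_ofReal_mul_I_re]
  congr 2
  push_cast
  field_simp

theorem sum_sq_norm_dft_mul_cos (x : ZMod (2 * t) → ℝ) (s : ℕ) :
    ∑ k ∈ range (2 * t), ‖dft t (fun j ↦ (x j : ℂ)) k‖ ^ 2 * Real.cos (s * (Real.pi * k / t)) =
      2 * t * ∑ j, x (j + s) * x j := by
  have h := congrArg Complex.re (ZMod.sum_sq_norm_dft_mul_stdAddChar (fun j ↦ (x j : ℂ)) s)
  simp only [Complex.re_sum, ← Complex.ofReal_pow, Complex.re_ofReal_mul, Complex.conj_ofReal,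
    ← Complex.ofReal_mul, ← Complex.ofReal_sum, ← Complex.ofReal_natCast, Complex.ofReal_re] at h
  rw [← ZMod.sum_range_natCast] at h
  simp only [← dft_eq_zmod_dft, re_stdAddChar_natCast_mul] at h
  rw [h]
  push_cast
  ring

theorem sum_sq_norm_dft_mul_cos_sq_sub_cos (x : ZMod (2 * t) → ℝ) :
    ∑ k ∈ range (2 * t), ‖dft t (fun j ↦ (x j : ℂ)) k‖ ^ 2 *
        (Real.cos (Real.pi * k / t) ^ 2 - Real.cos (Real.pi * k / t)) =
      t * ∑ j, x j * (x j - 2 * x (j + 1) + x (j + 2)) := by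
  have h0 := sum_sq_norm_dft_mul_cos x 0
  have h1 := sum_sq_norm_dft_mul_cos x 1
  have h2 := sum_sq_norm_dft_mul_cos x 2
  simp only [Nat.cast_zero, zero_mul, Real.cos_zero, mul_one, Nat.cast_one, one_mul,
    Nat.cast_ofNat, add_zero] at h0 h1 h2
  have summand (a θ : ℝ) : a * (Real.cos θ ^ 2 - Real.cos θ) =
      1 / 2 * a + 1 / 2 * (a * Real.cos (2 * θ)) - a * Real.cos θ := by
    rw [Real.cos_sq]; ring
  simp only [summand, sum_sub_distrib, sum_add_distrib, ← mul_sum, h0, h1, h2]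
  simp only [mul_sum, ← sum_add_distrib, ← sum_sub_distrib]
  exact sum_congr rfl fun j _ ↦ by ring

lemma minimaCount_eq_card (z : ZMod (2 * t) → ℤ) :
    minimaCount t z = #{j : ZMod (2 * t) | z (j - 1) > z j ∧ z (j + 1) > z j} := by
  rw [minimaCount, card_filter, card_filter,
    ZMod.sum_range_natCast fun j ↦ if z (j - 1) > z j ∧ z (j + 1) > z j then 1 else 0]

end

theorem minima_eq_half_t_formula_general (t : ℕ) (z : ZMod (2*t) → ℤ)
    (hstep : ∀ k : ZMod (2*t), |z (k + 1) - z k| = 1) :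
    (minimaCount t z : ℝ) =
      (t : ℝ)/2 + (1/(4*(t:ℝ))) * ∑ k ∈ Finset.range (2*t),
        (‖dft t (fun j => (z j : ℂ)) k‖)^2 *
          ((Real.cos (Real.pi * k / t))^2 - Real.cos (Real.pi * k / t)) := by
  rcases eq_or_ne t 0 with rfl | ht
  · simp [minimaCount]
  have : NeZero (2 * t) := ⟨by omega⟩
  have spatial :=
    congrArg (Int.cast : ℤ → ℝ) (ZMod.sum_diff_mul_diff_eq_sub_four_mul_card z hstep)
  push_cast at spatial
  have hz : (fun j ↦ (z j : ℂ)) = fun j ↦ ((z j : ℝ) : ℂ) := by simp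
  rw [hz, sum_sq_norm_dft_mul_cos_sq_sub_cos, ZMod.sum_mul_second_difference, spatial,
    minimaCount_eq_card]
  field_simp
  ring

theorem minima_eq_half_t_formula (t : ℕ) (ht : 2 ≤ t) (z : ZMod (2*t) → ℤ)
    (hstep : ∀ k : ZMod (2*t), |z (k + 1) - z k| = 1)
    (hant : ∀ k : ZMod (2*t), z (k + (t : ZMod (2*t))) = (t : ℤ) - z k) :
    (minimaCount t z : ℝ) =
      (t : ℝ)/2 + (1/(4*(t:ℝ))) * ∑ k ∈ Finset.range (2*t),
        (‖dft t (fun j => (z j : ℂ)) k‖)^2 *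
          ((Real.cos (Real.pi * k / t))^2 - Real.cos (Real.pi * k / t)) :=
  minima_eq_half_t_formula_general t z hstep
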